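/- Let ρ be a positive semidefinite matrix on H_A ⊗ H_B, where H_A = ℂ^{D_A} and H_B = ℂ^{D_B}, and let ρ_A = Tr_B ρ. Then ρ ≤ D_B · (ρ_A ⊗ I_B) in the Löwner order, where I_B is the identity on H_B. -/

import Mathlib

open Matrix
open scoped Kronecker ComplexOrder

noncomputable section

/-- Apply a real function to the spectrum of a Hermitian matrix via the spectral
(continuous functional) calculus; junk value `0` if the matrix is not Hermitian. -/
def matFun {n : Type*} [Fintype n] [DecidableEq n] (M : Matrix n n ℂ) (f : ℝ → ℝ) :
    Matrix n n ℂ :=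
  if hM : M.IsHermitian then
    (hM.eigenvectorUnitary : Matrix n n ℂ) *
      Matrix.diagonal (fun i => (f (hM.eigenvalues i) : ℂ)) *
        (star (hM.eigenvectorUnitary : Matrix n n ℂ))
  else 0

/-- Real (spectral) power of a matrix, with the convention `0 ^ β = 0` for `β ≠ 0`. -/
def matRpow {n : Type*} [Fintype n] [DecidableEq n] (M : Matrix n n ℂ) (β : ℝ) :
    Matrix n n ℂ :=
  matFun M (fun x => x ^ β)

/-- Trace norm (Schatten 1-norm): `‖M‖₁ = Tr √(Mᴴ M)`. -/
def traceNorm {n : Type*} [Fintype n] [DecidableEq n] (M : Matrix n n ℂ) : ℝ :=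
  (((Matrix.posSemidef_conjTranspose_mul_self M).1.eigenvectorUnitary : Matrix n n ℂ) *
    Matrix.diagonal (fun i => ((√((Matrix.posSemidef_conjTranspose_mul_self M).1.eigenvalues i) : ℝ) : ℂ)) *
      (star ((Matrix.posSemidef_conjTranspose_mul_self M).1.eigenvectorUnitary : Matrix n n ℂ))).trace.re

/-- Operator norm of a matrix, acting on the Euclidean (ℓ²) space. -/
def opNorm {n : Type*} [Fintype n] [DecidableEq n] (M : Matrix n n ℂ) : ℝ :=
  ‖Matrix.toEuclideanCLM (𝕜 := ℂ) M‖

/-- Partial trace over the second tensor factor. -/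
def ptraceRight {ιA ιB : Type*} [Fintype ιB] (M : Matrix (ιA × ιB) (ιA × ιB) ℂ) :
    Matrix ιA ιA ℂ :=
  Matrix.of fun a a' => ∑ b : ιB, M (a, b) (a', b)

/-- Heisenberg time evolution `ρ(t) = e^{-iHt} ρ e^{iHt}`. -/
def timeEvol {n : Type*} [Fintype n] [DecidableEq n] (H ρ : Matrix n n ℂ) (t : ℝ) :
    Matrix n n ℂ :=
  NormedSpace.exp ((-(Complex.I * (t : ℂ))) • H) * ρ *
    NormedSpace.exp ((Complex.I * (t : ℂ)) • H)

/-- Von Neumann entropy `S₁(σ) = -Tr(σ log σ)` (with the convention `0 log 0 = 0`). -/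
def entVN {n : Type*} [Fintype n] [DecidableEq n] (σ : Matrix n n ℂ) : ℝ :=
  -((matFun σ (fun x => x * Real.log x)).trace.re)

/-- α-Renyi entropy `S_α(σ) = (1/(1-α)) log Tr σ^α`. -/
def renyiEnt {n : Type*} [Fintype n] [DecidableEq n] (α : ℝ) (σ : Matrix n n ℂ) : ℝ :=
  (1 - α)⁻¹ * Real.log ((matRpow σ α).trace.re)

end

/-!
With `T b c = 1 ⊗ E_{bc}`, the map `ρ ↦ Tr_B ρ ⊗ I_B` has Kraus operators `T b c`, `b c : ι_B`.
Since `∑_b T b b = 1`, the operator Cauchy–Schwarz inequality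
`(∑ᵢ Kᵢ) ρ (∑ᵢ Kᵢ)ᴴ ≤ n ∑ᵢ Kᵢ ρ Kᵢᴴ` gives `ρ ≤ D_B ∑_b T b b ρ (T b b)ᴴ`,
and the off-diagonal Kraus terms `b ≠ c` only increase the right-hand side.
-/

open scoped MatrixOrder

namespace Matrix

variable {𝕜 n ι : Type*} [RCLike 𝕜] [Fintype n] [Fintype ι]

theorem sum_sub_mul_mul_conjTranspose_sub (K : ι → Matrix n n 𝕜) (ρ : Matrix n n 𝕜) :
    ∑ i, ∑ j, (K i - K j) * ρ * (K i - K j)ᴴ =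
      2 • (Fintype.card ι • ∑ i, K i * ρ * (K i)ᴴ - (∑ i, K i) * ρ * (∑ i, K i)ᴴ) := by
  simp only [conjTranspose_sub, conjTranspose_sum, sub_mul, mul_sub, Finset.sum_sub_distrib,
    ← Finset.mul_sum, ← Finset.sum_mul, Finset.sum_const, Finset.card_univ, mul_smul_comm,
    Finset.smul_sum]
  abel

theorem sum_mul_mul_conjTranspose_le (K : ι → Matrix n n 𝕜) {ρ : Matrix n n 𝕜} (hρ : 0 ≤ ρ) :
    (∑ i, K i) * ρ * (∑ i, K i)ᴴ ≤ Fintype.card ι • ∑ i, K i * ρ * (K i)ᴴ := by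
  have h : 0 ≤ ∑ i, ∑ j, (K i - K j) * ρ * (K i - K j)ᴴ :=
    Finset.sum_nonneg fun i _ => Finset.sum_nonneg fun j _ => star_right_conjugate_nonneg hρ _
  rw [sum_sub_mul_mul_conjTranspose_sub] at h
  rw [← sub_nonneg]
  simpa [← Nat.cast_smul_eq_nsmul ℝ, smul_smul] using smul_nonneg (by norm_num : (0 : ℝ) ≤ 2⁻¹) h

end Matrix

section PartialTrace

variable {ιA ιB : Type*} [Fintype ιB] [DecidableEq ιA] [DecidableEq ιB]

theorem sum_one_kronecker_single_self {α : Type*} [CommSemiring α] :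
    ∑ b : ιB, (1 : Matrix ιA ιA α) ⊗ₖ single b b (1 : α) = 1 := by
  rw [← one_kronecker_one, ← sum_single_one (m := ιB)]
  exact (map_sum (kroneckerBilinear (R := α) (1 : Matrix ιA ιA α)) _ _).symm

theorem ptraceRight_kronecker_one_eq_sum [Fintype ιA] (ρ : Matrix (ιA × ιB) (ιA × ιB) ℂ) :
    ptraceRight ρ ⊗ₖ (1 : Matrix ιB ιB ℂ) =
      ∑ b : ιB, ∑ c : ιB, ((1 : Matrix ιA ιA ℂ) ⊗ₖ single b c (1 : ℂ)) * ρ *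
        ((1 : Matrix ιA ιA ℂ) ⊗ₖ single b c (1 : ℂ))ᴴ := by
  ext ⟨a, β⟩ ⟨a', β'⟩
  simp only [ptraceRight, kroneckerMap_apply, of_apply, one_apply, mul_ite, mul_one, mul_zero,
    single, ite_and, Matrix.sum_apply, mul_apply, ite_mul, one_mul, zero_mul,
    Finset.sum_ite_irrel, Fintype.sum_prod_type, Finset.sum_ite_eq, Finset.mem_univ, ↓reduceIte,
    Finset.sum_const_zero, conjTranspose_apply, RCLike.star_def, Finset.sum_ite_eq']
  by_cases h : β = β' <;> simp [h, apply_ite (starRingEnd ℂ), mul_ite]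

theorem le_card_smul_ptraceRight_kronecker_one [Fintype ιA]
    {ρ : Matrix (ιA × ιB) (ιA × ιB) ℂ} (hρ : 0 ≤ ρ) :
    ρ ≤ Fintype.card ιB • (ptraceRight ρ ⊗ₖ (1 : Matrix ιB ιB ℂ)) := by
  set T : ιB → ιB → Matrix (ιA × ιB) (ιA × ιB) ℂ := fun b c => 1 ⊗ₖ single b c 1
  calc ρ = (∑ b, T b b) * ρ * (∑ b, T b b)ᴴ := by
        simp only [T, sum_one_kronecker_single_self, conjTranspose_one, one_mul, mul_one]
    _ ≤ Fintype.card ιB • ∑ b, T b b * ρ * (T b b)ᴴ := sum_mul_mul_conjTranspose_le _ hρ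
    _ ≤ Fintype.card ιB • ∑ b, ∑ c, T b c * ρ * (T b c)ᴴ := by
        gcongr with b
        exact Finset.single_le_sum (fun c _ => star_right_conjugate_nonneg hρ (T b c))
          (Finset.mem_univ b)
    _ = Fintype.card ιB • (ptraceRight ρ ⊗ₖ (1 : Matrix ιB ιB ℂ)) := by
        rw [ptraceRight_kronecker_one_eq_sum]

end PartialTrace

/-- For positive semidefinite `ρ` on `ℂ^{D_A} ⊗ ℂ^{D_B}` with
`ρ_A = Tr_B ρ`, one has `ρ ≤ D_B (ρ_A ⊗ I_B)` in the Löwner order. -/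
theorem stmt_5 (DA DB : ℕ)
    (ρ : Matrix (Fin DA × Fin DB) (Fin DA × Fin DB) ℂ) (hρ : ρ.PosSemidef) :
    ((DB : ℂ) • ((ptraceRight ρ) ⊗ₖ (1 : Matrix (Fin DB) (Fin DB) ℂ)) - ρ).PosSemidef := by
  have h := le_card_smul_ptraceRight_kronecker_one hρ.nonneg
  rwa [Fintype.card_fin, ← Nat.cast_smul_eq_nsmul ℂ] at h
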